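/- arXiv:2202.10298 — 2 statements merged into one kernel-verified Lean document; each statement's English description precedes it below -/
import Mathlib

section
/- Let g be a finite-dimensional Lie algebra, m a positive integer, and U = Ug[[ℏ]], U' = {Σ x_n ℏ^n | x_n ∈ Ug_{≤n}} ⊆ U (the completed Rees algebra for the PBW filtration). Give Ug^{⊗m} the filtration (Ug^{⊗m})_k = (Ug_{≤k})^{⊗m}. Then the corresponding completed Rees algebra Ug^{⊗m}[[ℏ]]^o equals the intersection, over i = 1,…,m, of the subalgebras U^{⊗(i−1)} ⊗ U' ⊗ U^{⊗(m−i)} of U^{⊗m} (completed tensor products over k[[ℏ]]). -/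
/-!
STATEMENT 6: For a finite-dimensional Lie algebra `g`, `m ≥ 1`,
`U = Ug[[ℏ]]` and `U'` the completed Rees algebra of the PBW filtration,
the completed Rees algebra of `Ug^{⊗m}` for the filtration `(Ug_{≤k})^{⊗m}`
equals the intersection over `i = 1, …, m` of the subalgebras
`U^{⊗(i-1)} ⊗ U' ⊗ U^{⊗(m-i)}` of `U^{⊗m}` (completed tensor products over `k[[ℏ]]`).

We model the completed tensor power `U^{⊗m}` as `PowerSeries (Ug^{⊗m})` with
`Ug^{⊗m} = TP k Ug (m-1)` built from iterated binary tensor products.  Under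
this identification, `U^{⊗(i-1)} ⊗ U' ⊗ U^{⊗(m-i)}` consists of the series whose
`k`-th coefficient lies in `Ug ⊗ ⋯ ⊗ Ug_{≤k} ⊗ ⋯ ⊗ Ug` (the `i`-th slot filtered),
and the completed Rees algebra of `Ug^{⊗m}` of the series whose `k`-th coefficient
lies in `(Ug_{≤k})^{⊗m}`.  Below `m = n + 1 ≥ 1`.
-/

open TensorProduct


section TPmachinery

variable (k : Type) [CommRing k] (H : Type) [Ring H] [Algebra k H]

/-- Auxiliary: `(n+1)`-fold tensor power of the algebra `H`, with its algebra structure. -/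
noncomputable def TPAux : ℕ → Σ (A : Type), Σ' (_ : Ring A), Algebra k A
  | 0 => ⟨H, ⟨inferInstance, inferInstance⟩⟩
  | n + 1 =>
    let p := TPAux n
    letI := p.2.1
    letI := p.2.2
    ⟨H ⊗[k] p.1, ⟨inferInstance, inferInstance⟩⟩

/-- `TP k H n` models `H^{⊗(n+1)}`. -/
noncomputable def TP (n : ℕ) : Type := (TPAux k H n).1

noncomputable instance (n : ℕ) : Ring (TPAux k H n).1 := (TPAux k H n).2.1
noncomputable instance (n : ℕ) : Algebra k (TPAux k H n).1 := (TPAux k H n).2.2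
noncomputable instance (n : ℕ) : Ring (TP k H n) := (TPAux k H n).2.1
noncomputable instance (n : ℕ) : Algebra k (TP k H n) := (TPAux k H n).2.2

/-- `π^{⊗(n+1)}` built from a linear endomorphism of `H`. -/
noncomputable def Pmap (π : H →ₗ[k] H) : ∀ n, TP k H n →ₗ[k] TP k H n
  | 0 => π
  | n + 1 => TensorProduct.map π (Pmap π n)

/-- Apply `Δ` to the head factor: `Δ ⊗ id^{⊗ n} : H^{⊗(n+1)} → H^{⊗(n+2)}`. -/
noncomputable def headDelta (Δc : H →ₗ[k] H ⊗[k] H) : ∀ n, TP k H n →ₗ[k] TP k H (n + 1)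
  | 0 => Δc
  | n + 1 => (TensorProduct.assoc k H H (TP k H n)).toLinearMap ∘ₗ
      (TensorProduct.map Δc LinearMap.id)

/-- Iterated coproduct `Δ^{(n+1)} : H → H^{⊗(n+1)}`, defined by `Δ^{(1)} = id` and
`Δ^{(n)} = (Δ ⊗ id^{⊗(n-2)}) ∘ Δ^{(n-1)}`. -/
noncomputable def Dmap (Δc : H →ₗ[k] H ⊗[k] H) : ∀ n, H →ₗ[k] TP k H n
  | 0 => LinearMap.id
  | n + 1 => headDelta k H Δc n ∘ₗ Dmap Δc n

/-- Elementary tensors in `TP k H n`. -/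
noncomputable def tpElem : ∀ n, (Fin (n + 1) → H) → TP k H n
  | 0, f => f 0
  | n + 1, f => f 0 ⊗ₜ[k] tpElem n (fun i => f i.succ)

end TPmachinery


/-- Tensor product of a family of submodules, as a submodule of `TP k H n`. -/
noncomputable def tensorSub (k : Type) [CommRing k] (H : Type) [Ring H] [Algebra k H] :
    ∀ n, (Fin (n + 1) → Submodule k H) → Submodule k (TP k H n)
  | 0, f => f 0
  | n + 1, f => LinearMap.range
      (TensorProduct.mapIncl (f 0) (tensorSub k H n (fun i => f i.succ)))

/-- PBW filtration: `Ug_{≤ n}`. -/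
noncomputable def UEAfil (k : Type) [CommRing k] (g : Type) [LieRing g] [LieAlgebra k g]
    (n : ℕ) : Submodule k (UniversalEnvelopingAlgebra k g) :=
  (Submodule.span k
    ({1} ∪ Set.range (UniversalEnvelopingAlgebra.ι k (L := g)))) ^ n

/-!
Both sides are conditions on each coefficient separately, so it suffices to show that
`⋂ i, H ⊗ ⋯ ⊗ S i ⊗ ⋯ ⊗ H = S 0 ⊗ ⋯ ⊗ S n` for subspaces `S i` of a vector space `H`,
and only `⊆` needs an argument. Over a field each `S i` has a projection `q i` onto it.
The tensor product `q 0 ⊗ ⋯ ⊗ q n` is then a projection onto `S 0 ⊗ ⋯ ⊗ S n`, and it is the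
composite of the single-slot maps `id ⊗ ⋯ ⊗ q i ⊗ ⋯ ⊗ id`. The `i`-th of these fixes every
element of `H ⊗ ⋯ ⊗ S i ⊗ ⋯ ⊗ H`, so an element of all these subspaces is fixed by the full
tensor product of projections and hence lies in `S 0 ⊗ ⋯ ⊗ S n`.
-/

lemma LinearMap.IsProj.comp_subtype {k M : Type} [CommRing k] [AddCommGroup M] [Module k M]
    {T : Submodule k M} {p : M →ₗ[k] M} (hp : LinearMap.IsProj T p) : p ∘ₗ T.subtype = T.subtype :=
  LinearMap.ext fun z => hp.map_id z z.2

lemma Submodule.exists_isProj {k V : Type} [Field k] [AddCommGroup V] [Module k V]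
    (S : Submodule k V) : ∃ p : V →ₗ[k] V, LinearMap.IsProj S p := by
  obtain ⟨S', hS'⟩ := S.exists_isCompl
  exact ⟨S.projection S' hS', Submodule.projection_apply_mem hS',
    fun _ hx => Submodule.projection_apply_of_mem_left hS' hx⟩

section TensorPowerMap

variable {k : Type} [CommRing k] {H : Type} [Ring H] [Algebra k H]

lemma tensorSub_mono : ∀ n {S T : Fin (n + 1) → Submodule k H},
    (∀ i, S i ≤ T i) → tensorSub k H n S ≤ tensorSub k H n T
  | 0, _, _, h => h 0
  | n + 1, _, _, h => range_mapIncl_mono (h 0) (tensorSub_mono n fun i => h i.succ)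

noncomputable def tpMap : ∀ n, (Fin (n + 1) → (H →ₗ[k] H)) → TP k H n →ₗ[k] TP k H n
  | 0, q => q 0
  | n + 1, q => map (q 0) (tpMap n fun i => q i.succ)

lemma tpMap_id : ∀ n, tpMap n (fun _ => (LinearMap.id : H →ₗ[k] H)) = LinearMap.id
  | 0 => rfl
  | n + 1 => by
    change map _ (tpMap n fun _ => LinearMap.id) = _
    rw [tpMap_id n, map_id]
    rfl

lemma tpMap_comp : ∀ n (q q' : Fin (n + 1) → (H →ₗ[k] H)),
    tpMap n (fun i => q i ∘ₗ q' i) = tpMap n q ∘ₗ tpMap n q'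
  | 0, _, _ => rfl
  | n + 1, q, q' => by
    change map _ (tpMap n fun i => q i.succ ∘ₗ q' i.succ) = _
    rw [tpMap_comp n, map_comp]
    rfl

lemma isProj_tpMap : ∀ n {S : Fin (n + 1) → Submodule k H} {q : Fin (n + 1) → (H →ₗ[k] H)},
    (∀ i, LinearMap.IsProj (S i) (q i)) → LinearMap.IsProj (tensorSub k H n S) (tpMap n q)
  | 0, _, _, hq => hq 0
  | n + 1, S, q, hq => by
    have h0 := hq 0
    have htail := isProj_tpMap n fun i => hq i.succ
    have hfactor : tpMap (n + 1) q = mapIncl (S 0) (tensorSub k H n fun i => S i.succ) ∘ₗ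
        map h0.codRestrict htail.codRestrict := by
      rw [mapIncl, ← map_comp, h0.subtype_comp_codRestrict, htail.subtype_comp_codRestrict]
      rfl
    refine ⟨fun x => hfactor ▸ LinearMap.mem_range_self _ _, ?_⟩
    rintro _ ⟨y, rfl⟩
    change (map (q 0) (tpMap n fun i => q i.succ) ∘ₗ mapIncl _ _) y = _
    rw [mapIncl, ← map_comp, h0.comp_subtype, htail.comp_subtype]
    rfl

lemma tpMap_apply_eq_self_of_forall_slot {n : ℕ} (q : Fin (n + 1) → (H →ₗ[k] H)) {x : TP k H n}
    (hx : ∀ i, tpMap n (fun t => if t = i then q t else LinearMap.id) x = x) :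
    tpMap n q x = x := by
  have hpartial : ∀ s : Finset (Fin (n + 1)),
      tpMap n (fun t => if t ∈ s then q t else LinearMap.id) x = x := by
    intro s
    induction s using Finset.induction_on with
    | empty => simp only [Finset.notMem_empty, if_false, tpMap_id, LinearMap.id_apply]
    | insert a s ha ih =>
      have hsplit : (fun t => if t ∈ insert a s then q t else LinearMap.id) = fun t =>
          (if t ∈ s then q t else LinearMap.id) ∘ₗ (if t = a then q t else LinearMap.id) := by
        funext t
        by_cases hta : t = a
        · subst hta
          simp [ha]
        · by_cases hts : t ∈ s <;> simp [hta, hts]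
      rw [hsplit, tpMap_comp, LinearMap.comp_apply, hx, ih]
  simpa only [Finset.mem_univ, if_true] using hpartial Finset.univ

end TensorPowerMap

theorem mem_tensorSub_iff_forall_mem_slot {k : Type} [Field k] {H : Type} [Ring H] [Algebra k H]
    {n : ℕ} (S : Fin (n + 1) → Submodule k H) (x : TP k H n) :
    x ∈ tensorSub k H n S ↔ ∀ i, x ∈ tensorSub k H n (fun t => if t = i then S t else ⊤) := by
  refine ⟨fun hx i => tensorSub_mono n (fun t => ?_) hx, fun hx => ?_⟩
  · split_ifs
    exacts [le_rfl, le_top]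
  choose q hq using fun i => (S i).exists_isProj
  have hslot : ∀ i, tpMap n (fun t => if t = i then q t else LinearMap.id) x = x := fun i =>
    (isProj_tpMap n fun t => by split_ifs; exacts [hq t, LinearMap.IsProj.top _ _]).map_id x (hx i)
  exact tpMap_apply_eq_self_of_forall_slot q hslot ▸ (isProj_tpMap n hq).map_mem x

theorem stmt_6_general (k : Type) [Field k]
    (g : Type) [LieRing g] [LieAlgebra k g]
    (n : ℕ) (f : PowerSeries (TP k (UniversalEnvelopingAlgebra k g) n)) :
    (∀ j : ℕ, PowerSeries.coeff j f ∈
        tensorSub k _ n (fun _ => UEAfil k g j)) ↔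
      (∀ i : Fin (n + 1), ∀ j : ℕ, PowerSeries.coeff j f ∈
        tensorSub k _ n (fun t => if t = i then UEAfil k g j else ⊤)) := by
  simp only [mem_tensorSub_iff_forall_mem_slot (fun _ => UEAfil k g _)]
  exact forall_comm

theorem stmt_6 (k : Type) [Field k] [CharZero k]
    (g : Type) [LieRing g] [LieAlgebra k g] [Module.Finite k g]
    (n : ℕ) (f : PowerSeries (TP k (UniversalEnvelopingAlgebra k g) n)) :
    (∀ j : ℕ, PowerSeries.coeff j f ∈
        tensorSub k _ n (fun _ => UEAfil k g j)) ↔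
      (∀ i : Fin (n + 1), ∀ j : ℕ, PowerSeries.coeff j f ∈
        tensorSub k _ n (fun t => if t = i then UEAfil k g j else ⊤)) :=
  stmt_6_general k g n f
end

section
/- Let R_± = (J_±^{−1})^{21}·e^{πι s Ω}·J_± be the R-matrices obtained by twisting R_KZ = e^{ℏΩ/2} (ℏ = 2πι s) by the differential twists J_± = Υ_0^{−1}Υ_±. Then the R-matrices are quantum Stokes matrices: R_+ = e^{πι s Ω_0}·S_−^{−1} and R_− = e^{πι s Ω_0}·S_+^{−1}, where S_± are the quantum Stokes matrices of the dynamical KZ equation. -/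
/-!
Both identities are group-theoretic consequences of the flip relation. Applying the flip to
`J₋ = e^{πιsΩ} J₊²¹ e^{−πιsΩ₀}` gives `J₋²¹ = e^{πιsΩ} J₊ e^{−πιsΩ₀}`, so that
`R₋ = e^{πιsΩ₀} J₊⁻¹ J₋ = e^{πιsΩ₀} S₊⁻¹`. Substituting `S₊ = J₋⁻¹ J₊` and `J₋²¹` into
`S₋ = e^{−πιsΩ₀} S₊²¹ e^{πιsΩ₀}` gives `S₋ = J₊⁻¹ e^{−πιsΩ} J₊²¹ e^{πιsΩ₀}`, whose inverse
is `e^{−πιsΩ₀} R₊`.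
-/

theorem map_neg_eq_inv_of_map_add {M G : Type*} [AddGroup M] [Group G] {f : M → G}
    (hf : ∀ a b, f (a + b) = f a * f b) (a : M) : f (-a) = (f a)⁻¹ := by
  have h0 : f 0 = 1 := mul_eq_left.mp (by rw [← hf 0 0, add_zero])
  exact eq_inv_of_mul_eq_one_left (by rw [← hf, neg_add_cancel, h0])

section TwistedRMatrix

variable {G : Type*} [Group G] (σ : G →* G) {E F Jp Jm Sp Sm : G}

theorem map_eq_of_eq_mul_map_mul_inv (hσ : Function.Involutive σ) (hE : σ E = E)
    (hF : σ F = F) (hJ : Jm = E * σ Jp * F⁻¹) : σ Jm = E * Jp * F⁻¹ := by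
  rw [hJ, map_mul, map_mul, map_inv, hE, hF, hσ Jp]

theorem inv_map_mul_mul_eq_mul_inv_of_eq_inv_mul (hσJ : σ Jm = E * Jp * F⁻¹)
    (hS : Sp = Jm⁻¹ * Jp) : (σ Jm)⁻¹ * E * Jm = F * Sp⁻¹ := by
  rw [hσJ, hS]
  group

theorem inv_map_mul_mul_eq_mul_inv_of_eq_conj (hσJ : σ Jm = E * Jp * F⁻¹)
    (hS : Sp = Jm⁻¹ * Jp) (hSrel : Sm = F⁻¹ * σ Sp * F) : (σ Jp)⁻¹ * E * Jp = F * Sm⁻¹ := by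
  rw [hSrel, hS, map_mul, map_inv, hσJ]
  group

end TwistedRMatrix

theorem stmt_15_general (A : Type) [Ring A] [Algebra ℂ A]
    (τ : A ≃ₐ[ℂ] A) (hτinv : ∀ a, τ (τ a) = a)
    (EΩ EΩ0 : ℂ → Aˣ)
    (hEΩ0 : ∀ a b, EΩ0 (a + b) = EΩ0 a * EΩ0 b)
    (hτEΩ : ∀ c, τ (EΩ c) = EΩ c) (hτEΩ0 : ∀ c, τ (EΩ0 c) = EΩ0 c)
    (Jp Jm Sp Sm : Aˣ)
    -- `S₊ = J₋⁻¹ J₊`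
    (hS : (Sp : A) = (Jm⁻¹ : Aˣ) * (Jp : A))
    -- `J₋ = e^{πιsΩ} J₊²¹ e^{−πιsΩ₀}` (Statement 13)
    (hJrel : (Jm : A) = (EΩ (Real.pi * Complex.I) : A) * τ (Jp : A) *
      (EΩ0 (-(Real.pi * Complex.I)) : A))
    -- `S₋ = e^{−πιsΩ₀} S₊²¹ e^{πιsΩ₀}` (Statement 14 (1))
    (hSrel : (Sm : A) = (EΩ0 (-(Real.pi * Complex.I)) : A) * τ (Sp : A) *
      (EΩ0 (Real.pi * Complex.I) : A))
    -- the twisted R-matrices `R± = (J±⁻¹)²¹ · e^{πιsΩ} · J±`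
    (Rp Rm : A)
    (hRp : Rp = τ ((Jp⁻¹ : Aˣ) : A) * (EΩ (Real.pi * Complex.I) : A) * (Jp : A))
    (hRm : Rm = τ ((Jm⁻¹ : Aˣ) : A) * (EΩ (Real.pi * Complex.I) : A) * (Jm : A)) :
    Rp = (EΩ0 (Real.pi * Complex.I) : A) * ((Sm⁻¹ : Aˣ) : A) ∧
    Rm = (EΩ0 (Real.pi * Complex.I) : A) * ((Sp⁻¹ : Aˣ) : A) := by
  set c : ℂ := Real.pi * Complex.I
  let σ : Aˣ →* Aˣ := Units.map τ
  have hσ : Function.Involutive σ := fun u => Units.ext (hτinv u)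
  have hF : EΩ0 (-c) = (EΩ0 c)⁻¹ := map_neg_eq_inv_of_map_add hEΩ0 c
  have hSU : Sp = Jm⁻¹ * Jp := Units.ext hS
  have hJU : Jm = EΩ c * σ Jp * (EΩ0 c)⁻¹ := Units.ext (by rw [← hF]; exact hJrel)
  have hSmU : Sm = (EΩ0 c)⁻¹ * σ Sp * EΩ0 c := Units.ext (by rw [← hF]; exact hSrel)
  have hσJm : σ Jm = EΩ c * Jp * (EΩ0 c)⁻¹ :=
    map_eq_of_eq_mul_map_mul_inv σ hσ (Units.ext (hτEΩ c)) (Units.ext (hτEΩ0 c)) hJU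
  constructor
  · rw [hRp]
    exact congrArg Units.val (inv_map_mul_mul_eq_mul_inv_of_eq_conj σ hσJm hSU hSmU)
  · rw [hRm]
    exact congrArg Units.val (inv_map_mul_mul_eq_mul_inv_of_eq_inv_mul σ hσJm hSU)

theorem stmt_15 (A : Type) [Ring A] [Algebra ℂ A]
    (τ : A ≃ₐ[ℂ] A) (hτinv : ∀ a, τ (τ a) = a)
    (EΩ EΩ0 : ℂ → Aˣ)
    (hEΩ : ∀ a b, EΩ (a + b) = EΩ a * EΩ b) (hEΩ0 : ∀ a b, EΩ0 (a + b) = EΩ0 a * EΩ0 b)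
    (hτEΩ : ∀ c, τ (EΩ c) = EΩ c) (hτEΩ0 : ∀ c, τ (EΩ0 c) = EΩ0 c)
    (Jp Jm Sp Sm : Aˣ)
    -- `S₊ = J₋⁻¹ J₊`
    (hS : (Sp : A) = (Jm⁻¹ : Aˣ) * (Jp : A))
    -- `J₋ = e^{πιsΩ} J₊²¹ e^{−πιsΩ₀}` (Statement 13)
    (hJrel : (Jm : A) = (EΩ (Real.pi * Complex.I) : A) * τ (Jp : A) *
      (EΩ0 (-(Real.pi * Complex.I)) : A))
    -- `S₋ = e^{−πιsΩ₀} S₊²¹ e^{πιsΩ₀}` (Statement 14 (1))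
    (hSrel : (Sm : A) = (EΩ0 (-(Real.pi * Complex.I)) : A) * τ (Sp : A) *
      (EΩ0 (Real.pi * Complex.I) : A))
    -- monodromy relation (Statement 14 (2))
    (hmon : (Jp⁻¹ : Aˣ) * (EΩ (2 * Real.pi * Complex.I) : A) * (Jp : A) =
      (Sp⁻¹ : Aˣ) * (EΩ0 (2 * Real.pi * Complex.I) : A) * ((Sm⁻¹ : Aˣ) : A))
    -- the twisted R-matrices `R± = (J±⁻¹)²¹ · e^{πιsΩ} · J±`
    (Rp Rm : A)
    (hRp : Rp = τ ((Jp⁻¹ : Aˣ) : A) * (EΩ (Real.pi * Complex.I) : A) * (Jp : A))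
    (hRm : Rm = τ ((Jm⁻¹ : Aˣ) : A) * (EΩ (Real.pi * Complex.I) : A) * (Jm : A)) :
    Rp = (EΩ0 (Real.pi * Complex.I) : A) * ((Sm⁻¹ : Aˣ) : A) ∧
    Rm = (EΩ0 (Real.pi * Complex.I) : A) * ((Sp⁻¹ : Aˣ) : A) :=
  stmt_15_general A τ hτinv EΩ EΩ0 hEΩ0 hτEΩ hτEΩ0 Jp Jm Sp Sm hS hJrel hSrel Rp Rm hRp hRm
end
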